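/- Let G be a hyperbolic random graph on n vertices with parameters α ∈ (1/2,1) and C ∈ ℝ, and fix τ > 0. Let I be any fixed angular interval consisting of at most w = e^{γ(n,τ)}·log^{(3)}(n) consecutive sectors of the sector decomposition. Then the expected number of sampled points whose angular coordinate lies in I is at most (1/2)·e^{γ(n,τ)}·log^{(3)}(n)·γ(n,τ)·(1 ± o(1)); in particular, for all sufficiently large n it is at most (1/2)·τ·log^{(2)}(n). -/

import Mathlib

open MeasureTheory ProbabilityTheory Filter Real Asymptotics

/-- Twice iterated natural logarithm. -/
noncomputable def loglog (n : ℕ) : ℝ := Real.log (Real.log n)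

/-- Thrice iterated natural logarithm. -/
noncomputable def logloglog (n : ℕ) : ℝ := Real.log (Real.log (Real.log n))

/-- `γ(n, τ) = log(τ·log^{(2)}(n) / (2·(log^{(3)}(n))²))`. -/
noncomputable def gam (n : ℕ) (τ : ℝ) : ℝ :=
  Real.log (τ * loglog n / (2 * (logloglog n) ^ 2))

/-- The radius `R = 2·log n + C` of the hyperbolic disk. -/
noncomputable def bigR (C : ℝ) (n : ℕ) : ℝ := 2 * Real.log n + C

/-- The threshold radius `ρ(n) = R − log((π/2)·e^{C/2}·γ(n,τ))`. -/
noncomputable def rho (C τ : ℝ) (n : ℕ) : ℝ :=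
  bigR C n - Real.log (Real.pi / 2 * Real.exp (C / 2) * gam n τ)

/-- `θ_n`, the maximal angular distance at which two points of radius `ρ(n)` are
adjacent in the hyperbolic disk of radius `R`. -/
noncomputable def theta (C τ : ℝ) (n : ℕ) : ℝ :=
  Real.arccos ((Real.cosh (rho C τ n) ^ 2 - Real.cosh (bigR C n)) /
    Real.sinh (rho C τ n) ^ 2)

/-- The number of sectors of angular width `θ_n` in the disk. -/
noncomputable def nSec (C τ : ℝ) (n : ℕ) : ℕ := ⌊2 * Real.pi / theta C τ n⌋₊

/-- The threshold `w = e^{γ(n,τ)}·log^{(3)}(n)` distinguishing narrow and wide runs. -/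
noncomputable def wThr (n : ℕ) (τ : ℝ) : ℝ := Real.exp (gam n τ) * logloglog n

/-- The index of the sector (among `n'` equal sectors of the disk) containing the
angle `φ`. -/
noncomputable def sectorIdx (n' : ℕ) (φ : ℝ) : ZMod n' :=
  ((⌊φ * n' / (2 * Real.pi)⌋ : ℤ) : ZMod n')

/-- `occupancy n' angles k` is `true` iff sector `k` contains the angular coordinate of
at least one of the points. -/
noncomputable def occupancy {n : ℕ} (n' : ℕ) (angles : Fin n → ℝ) (k : ZMod n') : Bool :=
  @decide (∃ i, sectorIdx n' (angles i) = k) (Classical.propDecidable _)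

/-- The length of the maximal circular run of `true`s of `s` containing the index `i`;
`0` if `s i = false`. -/
noncomputable def runLen {n' : ℕ} (s : ZMod n' → Bool) (i : ZMod n') : ℕ :=
  sSup {k : ℕ | k ≤ n' ∧ ∃ j : ZMod n',
    (∀ m : ℕ, m < k → s (j + (m : ZMod n')) = true) ∧
    ∃ t : ℕ, t < k ∧ i = j + (t : ZMod n')}

/-- The number of indices lying in a success run of length greater than `w`. -/
noncomputable def runSumGT {n' : ℕ} (w : ℝ) (s : ZMod n' → Bool) : ℕ :=
  Nat.card {i : ZMod n' | w < (runLen s i : ℝ)}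

/-- The probability density of a point (angle, radius) of a hyperbolic random graph
with parameters `α` and disk radius `R`. -/
noncomputable def hrgPDF (α R : ℝ) (p : ℝ × ℝ) : ℝ :=
  if 0 ≤ p.1 ∧ p.1 < 2 * Real.pi ∧ 0 ≤ p.2 ∧ p.2 ≤ R then
    (1 / (2 * Real.pi)) * (α * Real.sinh (α * p.2) / (Real.cosh (α * R) - 1))
  else 0

/-- The distribution of a single point (angle, radius) of a hyperbolic random graph. -/
noncomputable def hrgMeasure (α R : ℝ) : Measure (ℝ × ℝ) :=
  volume.withDensity fun p => ENNReal.ofReal (hrgPDF α R p)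

/-- `pts` is a sample of a hyperbolic random graph on `n` vertices with parameters
`α` and `C`: the points (angle, radius) are independent, each with the hyperbolic
density on the disk of radius `R = 2 log n + C`. -/
structure IsHRG (α C : ℝ) (n : ℕ) {Ω : Type*} [MeasurableSpace Ω] (μ : Measure Ω)
    (pts : Fin n → Ω → ℝ × ℝ) : Prop where
  meas : ∀ i, Measurable (pts i)
  indep : iIndepFun pts μ
  law : ∀ i, Measure.map (pts i) μ = hrgMeasure α (bigR C n)

/-- The number of sampled points whose angular coordinate lies in the angular interval
formed by the `ℓ` consecutive sectors `j, j+1, …, j+ℓ−1`. -/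
noncomputable def ptsInWindow {n : ℕ} (n' : ℕ) (angles : Fin n → ℝ)
    (j : ZMod n') (ℓ : ℕ) : ℕ :=
  Nat.card {i : Fin n | ∃ t : ℕ, t < ℓ ∧ sectorIdx n' (angles i) = j + (t : ZMod n')}

/-!
The angle of a point is uniform on `[0, 2π)` and independent of its radius, so a window of `ℓ`
sectors contains a given point with probability at most `ℓ / n'`, and by linearity of expectation
it contains at most `n ℓ / n'` points on average. For the sector width, the hyperbolic law of
cosines gives `sin (θ_n / 2) = sinh (R / 2) / sinh ρ(n) ~ e^{R/2 - ρ(n)} = π γ / (2 n)`, hence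
`θ_n ~ π γ / n` and `n' ~ 2 n / γ`, so for `ℓ ≤ w` the expectation is at most
`w γ / 2 · (1 + o(1))`. Since `e^γ = τ log^{(2)} n / (2 (log^{(3)} n)²)` and `γ ~ log^{(3)} n`,
this is `(1/4 + o(1)) τ log^{(2)} n`.
-/

open scoped ENNReal Topology

theorem arccos_one_sub_two_mul_sq {x : ℝ} (h0 : 0 ≤ x) (h1 : x ≤ 1) :
    arccos (1 - 2 * x ^ 2) = 2 * arcsin x := by
  have hle : arcsin x ≤ π / 2 := arcsin_le_pi_div_two x
  rw [← sin_arcsin (by linarith) h1, ← cos_two_mul_eq_one_sub, sin_arcsin (by linarith) h1,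
    arccos_cos (by linarith [arcsin_nonneg.2 h0]) (by linarith)]

theorem cosh_sq_sub_cosh_div_sinh_sq (x y : ℝ) (hy : sinh y ≠ 0) :
    (cosh y ^ 2 - cosh x) / sinh y ^ 2 = 1 - 2 * (sinh (x / 2) / sinh y) ^ 2 := by
  have hx : cosh x = cosh (2 * (x / 2)) := by ring_nf
  rw [hx, cosh_two_mul, cosh_sq, cosh_sq]
  field_simp
  ring

theorem sinh_div_exp (x : ℝ) : sinh x / exp x = (1 - exp (-x) ^ 2) / 2 := by
  rw [sinh_eq, ← exp_nat_mul]
  field_simp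
  rw [mul_sub, mul_one, ← exp_add]
  ring_nf

theorem tendsto_sinh_div_exp_atTop : Tendsto (fun x => sinh x / exp x) atTop (𝓝 (1 / 2)) := by
  simp_rw [sinh_div_exp]
  simpa using ((tendsto_exp_neg_atTop_nhds_zero.pow 2).const_sub 1).div_const 2

theorem tendsto_arcsin_div_self : Tendsto (fun x => arcsin x / x) (𝓝[≠] 0) (𝓝 1) := by
  have h := hasDerivAt_iff_tendsto_slope_zero.1
    (hasDerivAt_arcsin (x := 0) (by norm_num) (by norm_num))
  simpa [div_eq_inv_mul] using h

theorem integral_natCard_mem_eq {ι Ω E : Type*} [Fintype ι] [MeasurableSpace Ω]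
    [MeasurableSpace E] {μ : Measure Ω} [IsFiniteMeasure μ] {X : ι → Ω → E}
    (hX : ∀ i, Measurable (X i)) {S : Set E} (hS : MeasurableSet S) :
    ∫ ω, (Nat.card {i | X i ω ∈ S} : ℝ) ∂μ = ∑ i, (μ.map (X i)).real S := by
  classical
  have hcard : ∀ ω, (Nat.card {i | X i ω ∈ S} : ℝ) = ∑ i, (X i ⁻¹' S).indicator 1 ω := by
    intro ω
    rw [Nat.card_eq_fintype_card, Fintype.card_subtype, Finset.card_filter]
    simp [Set.indicator_apply]
  simp_rw [hcard]
  rw [integral_finsetSum _ fun i _ => (integrable_const 1).indicator (hX i hS)]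
  simp [integral_indicator_one (hX _ hS), map_measureReal_apply (hX _) hS]

noncomputable def angleMeasure : Measure ℝ :=
  ENNReal.ofReal (1 / (2 * π)) • volume.restrict (Set.Ico 0 (2 * π))

noncomputable def radialMeasure (α R : ℝ) : Measure ℝ :=
  volume.withDensity fun r =>
    ENNReal.ofReal (if 0 ≤ r ∧ r ≤ R then α * sinh (α * r) / (cosh (α * R) - 1) else 0)

instance (α R : ℝ) : SFinite (radialMeasure α R) := by
  unfold radialMeasure; infer_instance

theorem hrgMeasure_eq_prod (α R : ℝ) :
    hrgMeasure α R = angleMeasure.prod (radialMeasure α R) := by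
  have hIco : MeasurableSet (Set.Ico (0 : ℝ) (2 * π)) := measurableSet_Ico
  have hradial : Measurable fun r : ℝ =>
      ENNReal.ofReal (if 0 ≤ r ∧ r ≤ R then α * sinh (α * r) / (cosh (α * R) - 1) else 0) :=
    (Measurable.ite measurableSet_Icc (by fun_prop) measurable_const).ennreal_ofReal
  rw [angleMeasure, ← withDensity_const, ← withDensity_indicator hIco, radialMeasure,
    prod_withDensity (measurable_const.indicator hIco) hradial, ← Measure.volume_eq_prod,
    hrgMeasure]
  congr 1
  funext p
  simp only [hrgPDF, Set.indicator_apply, Set.mem_Ico]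
  split_ifs <;> first | exact ENNReal.ofReal_mul (by positivity) | simp_all

theorem angleMeasure_univ : angleMeasure Set.univ = 1 := by
  rw [angleMeasure, Measure.smul_apply, Measure.restrict_apply_univ, Real.volume_Ico, smul_eq_mul,
    ← ENNReal.ofReal_mul (by positivity)]
  field_simp
  simp

theorem map_fst_hrgMeasure {α R : ℝ} [IsProbabilityMeasure (hrgMeasure α R)] :
    (hrgMeasure α R).map Prod.fst = angleMeasure := by
  have hmass : radialMeasure α R Set.univ = 1 := by
    have h := measure_univ (μ := hrgMeasure α R)
    rwa [hrgMeasure_eq_prod, ← Set.univ_prod_univ, Measure.prod_prod, angleMeasure_univ,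
      one_mul] at h
  rw [hrgMeasure_eq_prod, Measure.map_fst_prod, hmass, one_smul]

theorem mem_Ico_of_sectorIdx_eq {n' : ℕ} [NeZero n'] {φ : ℝ} {k : ZMod n'}
    (hφ : φ ∈ Set.Ico 0 (2 * π)) (hk : sectorIdx n' φ = k) :
    φ ∈ Set.Ico (2 * π * k.val / n') (2 * π * (k.val + 1) / n') := by
  have hn' : (0 : ℝ) < n' := by simp [Nat.pos_of_neZero]
  have h2π : 0 < 2 * π := by positivity
  set m := ⌊φ * n' / (2 * π)⌋
  have hm0 : 0 ≤ m := Int.floor_nonneg.2 (by have := hφ.1; positivity)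
  have hmn : m < n' := Int.floor_lt.2 <| by
    rw [div_lt_iff₀ h2π]; push_cast; nlinarith [hφ.2]
  have hval : (k.val : ℤ) = m := by
    rw [← hk, sectorIdx, ZMod.val_intCast, Int.emod_eq_of_lt hm0 hmn]
  have hfloor := Int.floor_eq_iff.1 hval.symm
  push_cast at hfloor
  constructor
  · rw [div_le_iff₀ hn']; have := hfloor.1; rw [le_div_iff₀ h2π] at this; linarith
  · rw [lt_div_iff₀ hn']; have := hfloor.2; rw [div_lt_iff₀ h2π] at this; linarith

theorem angleMeasure_sectorIdx_eq_le {n' : ℕ} [NeZero n'] (k : ZMod n') :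
    angleMeasure {φ | sectorIdx n' φ = k} ≤ (n' : ℝ≥0∞)⁻¹ := by
  have hn' : (0 : ℝ) < n' := by simp [Nat.pos_of_neZero]
  calc angleMeasure {φ | sectorIdx n' φ = k}
      = ENNReal.ofReal (1 / (2 * π)) * volume ({φ | sectorIdx n' φ = k} ∩ Set.Ico 0 (2 * π)) := by
        rw [angleMeasure, Measure.smul_apply, Measure.restrict_apply' measurableSet_Ico,
          smul_eq_mul]
    _ ≤ ENNReal.ofReal (1 / (2 * π)) *
          volume (Set.Ico (2 * π * k.val / n') (2 * π * (k.val + 1) / n')) := by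
        gcongr
        exact fun φ hφ => mem_Ico_of_sectorIdx_eq hφ.2 hφ.1
    _ = (n' : ℝ≥0∞)⁻¹ := by
        rw [Real.volume_Ico, ← ENNReal.ofReal_mul (by positivity), ← ENNReal.ofReal_natCast,
          ← ENNReal.ofReal_inv_of_pos hn']
        congr 1
        field_simp
        ring

def sectorWindow (n' : ℕ) (j : ZMod n') (ℓ : ℕ) : Set ℝ :=
  {φ | ∃ t : ℕ, t < ℓ ∧ sectorIdx n' φ = j + (t : ZMod n')}

theorem sectorWindow_eq_biUnion (n' : ℕ) (j : ZMod n') (ℓ : ℕ) :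
    sectorWindow n' j ℓ = ⋃ t ∈ Finset.range ℓ, {φ | sectorIdx n' φ = j + (t : ZMod n')} := by
  ext φ; simp [sectorWindow]

theorem measurableSet_sectorIdx_eq (n' : ℕ) (k : ZMod n') :
    MeasurableSet {φ : ℝ | sectorIdx n' φ = k} :=
  ((measurable_id.mul_const _).div_const _).floor
    (Set.to_countable {m : ℤ | (m : ZMod n') = k}).measurableSet

theorem measurableSet_sectorWindow (n' : ℕ) (j : ZMod n') (ℓ : ℕ) :
    MeasurableSet (sectorWindow n' j ℓ) := by
  rw [sectorWindow_eq_biUnion]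
  exact Finset.measurableSet_biUnion _ fun t _ => measurableSet_sectorIdx_eq n' _

theorem angleMeasure_sectorWindow_le {n' : ℕ} [NeZero n'] (j : ZMod n') (ℓ : ℕ) :
    angleMeasure (sectorWindow n' j ℓ) ≤ ℓ * (n' : ℝ≥0∞)⁻¹ := by
  rw [sectorWindow_eq_biUnion]
  calc _ ≤ ∑ t ∈ Finset.range ℓ, angleMeasure {φ | sectorIdx n' φ = j + (t : ZMod n')} :=
        measure_biUnion_finset_le _ _
    _ ≤ ∑ _t ∈ Finset.range ℓ, (n' : ℝ≥0∞)⁻¹ :=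
        Finset.sum_le_sum fun t _ => angleMeasure_sectorIdx_eq_le _
    _ = ℓ * (n' : ℝ≥0∞)⁻¹ := by simp

namespace IsHRG

variable {α C : ℝ} {n : ℕ} {Ω : Type*} [MeasurableSpace Ω] {μ : Measure Ω}
  [IsProbabilityMeasure μ] {pts : Fin n → Ω → ℝ × ℝ}

theorem map_angle (h : IsHRG α C n μ pts) (i : Fin n) :
    μ.map (fun ω => (pts i ω).1) = angleMeasure := by
  have := Measure.isProbabilityMeasure_map (μ := μ) (h.meas i).aemeasurable
  rw [h.law i] at this
  rw [← Function.comp_def Prod.fst, ← Measure.map_map measurable_fst (h.meas i), h.law i,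
    map_fst_hrgMeasure]

theorem integral_ptsInWindow_le (h : IsHRG α C n μ pts) (n' : ℕ) [NeZero n'] (j : ZMod n')
    (ℓ : ℕ) :
    ∫ ω, (ptsInWindow n' (fun i => (pts i ω).1) j ℓ : ℝ) ∂μ ≤ n * ℓ / n' := by
  have hX : ∀ i, Measurable fun ω => (pts i ω).1 := fun i => measurable_fst.comp (h.meas i)
  have hwin := angleMeasure_sectorWindow_le j ℓ (n' := n')
  calc _ = ∑ i : Fin n, (μ.map fun ω => (pts i ω).1).real (sectorWindow n' j ℓ) :=
        integral_natCard_mem_eq hX (measurableSet_sectorWindow n' j ℓ)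
    _ = n * angleMeasure.real (sectorWindow n' j ℓ) := by simp [h.map_angle]
    _ ≤ n * ℓ / n' := by
        rw [mul_div_assoc]
        gcongr
        refine ENNReal.toReal_le_of_le_ofReal (by positivity) (hwin.trans_eq ?_)
        rw [div_eq_mul_inv, ENNReal.ofReal_mul (by positivity),
          ENNReal.ofReal_inv_of_pos (by simp [Nat.pos_of_neZero])]
        simp

end IsHRG

theorem tendsto_log_natCast_atTop : Tendsto (fun n : ℕ => log n) atTop atTop :=
  tendsto_log_atTop.comp tendsto_natCast_atTop_atTop

theorem tendsto_loglog_atTop : Tendsto loglog atTop atTop :=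
  tendsto_log_atTop.comp tendsto_log_natCast_atTop

theorem tendsto_logloglog_atTop : Tendsto logloglog atTop atTop :=
  tendsto_log_atTop.comp tendsto_loglog_atTop

theorem tendsto_bigR_atTop (C : ℝ) : Tendsto (bigR C) atTop atTop :=
  tendsto_atTop_add_const_right _ C (tendsto_log_natCast_atTop.const_mul_atTop two_pos)

theorem exp_half_bigR_sub_rho (C τ : ℝ) {n : ℕ} (hn : n ≠ 0) (hγ : 0 < gam n τ) :
    exp (bigR C n / 2 - rho C τ n) = π / 2 * gam n τ / n := by
  have hn' : (0 : ℝ) < n := by positivity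
  have h : bigR C n / 2 - rho C τ n = log (π / 2 * exp (C / 2) * gam n τ) - log n - C / 2 := by
    rw [rho, bigR]; ring
  rw [h, exp_sub, exp_sub, exp_log (by positivity), exp_log hn']
  field_simp

noncomputable def sinHalfTheta (C τ : ℝ) (n : ℕ) : ℝ := sinh (bigR C n / 2) / sinh (rho C τ n)

section Asymptotics

variable (C : ℝ) {τ : ℝ} (hτ : 0 < τ)
include hτ

theorem gam_eventually_eq :
    ∀ᶠ n : ℕ in atTop, gam n τ = log τ - log 2 + logloglog n - 2 * log (logloglog n) := by
  filter_upwards [tendsto_loglog_atTop.eventually_gt_atTop 0,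
    tendsto_logloglog_atTop.eventually_gt_atTop 0] with n hLL hLLL
  rw [gam, log_div (by positivity) (by positivity), log_mul hτ.ne' hLL.ne',
    log_mul two_ne_zero (by positivity), log_pow, logloglog, loglog]
  push_cast
  ring

theorem tendsto_gam_div_logloglog :
    Tendsto (fun n => gam n τ / logloglog n) atTop (𝓝 1) := by
  have hlog : Tendsto (fun n => log (logloglog n) / logloglog n) atTop (𝓝 0) :=
    isLittleO_log_id_atTop.tendsto_div_nhds_zero.comp tendsto_logloglog_atTop
  have hconst : Tendsto (fun n => (log τ - log 2) / logloglog n) atTop (𝓝 0) :=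
    tendsto_const_nhds.div_atTop tendsto_logloglog_atTop
  have h := (hconst.add_const 1).sub (hlog.const_mul 2)
  rw [zero_add, mul_zero, sub_zero] at h
  refine h.congr' ?_
  filter_upwards [gam_eventually_eq hτ, tendsto_logloglog_atTop.eventually_gt_atTop 0]
    with n hγ hLLL
  rw [hγ]
  field_simp

theorem tendsto_gam_atTop : Tendsto (fun n => gam n τ) atTop atTop := by
  refine ((tendsto_gam_div_logloglog hτ).pos_mul_atTop one_pos tendsto_logloglog_atTop).congr' ?_
  filter_upwards [tendsto_logloglog_atTop.eventually_gt_atTop 0] with n hLLL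
  exact div_mul_cancel₀ _ hLLL.ne'

theorem tendsto_mul_gam_div_natCast (c : ℝ) :
    Tendsto (fun n : ℕ => c * gam n τ / n) atTop (𝓝 0) := by
  have hlog : Tendsto (fun n : ℕ => log n / n) atTop (𝓝 0) :=
    isLittleO_log_id_atTop.tendsto_div_nhds_zero.comp tendsto_natCast_atTop_atTop
  have hLLL : Tendsto (fun n : ℕ => logloglog n / n) atTop (𝓝 0) := by
    refine squeeze_zero' ?_ ?_ hlog
    · filter_upwards [tendsto_logloglog_atTop.eventually_ge_atTop 0] with n h
      positivity
    · filter_upwards [tendsto_loglog_atTop.eventually_gt_atTop 0,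
        tendsto_log_natCast_atTop.eventually_gt_atTop 0] with n hLL hL
      gcongr
      exact (log_le_self hLL.le).trans (log_le_self hL.le)
  have h := ((tendsto_gam_div_logloglog hτ).mul hLLL).const_mul c
  rw [one_mul, mul_zero] at h
  refine h.congr' ?_
  filter_upwards [tendsto_logloglog_atTop.eventually_gt_atTop 0] with n hLLL
  field_simp

theorem tendsto_rho_sub_half_bigR : Tendsto (fun n => rho C τ n - bigR C n / 2) atTop atTop := by
  have hexp : Tendsto (fun n => exp (bigR C n / 2 - rho C τ n)) atTop (𝓝 0) := by
    refine (tendsto_mul_gam_div_natCast hτ (π / 2)).congr' ?_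
    filter_upwards [eventually_ne_atTop 0, (tendsto_gam_atTop hτ).eventually_gt_atTop 0]
      with n hn hγ
    exact (exp_half_bigR_sub_rho C τ hn hγ).symm
  simpa [Function.comp_def] using
    tendsto_neg_atBot_atTop.comp (tendsto_exp_comp_nhds_zero.1 hexp)

theorem tendsto_rho_atTop : Tendsto (rho C τ) atTop atTop := by
  have h := (tendsto_rho_sub_half_bigR C hτ).atTop_add_atTop
    ((tendsto_bigR_atTop C).atTop_div_const two_pos)
  simpa using h

theorem tendsto_sinHalfTheta_div :
    Tendsto (fun n => sinHalfTheta C τ n / (π / 2 * gam n τ / n)) atTop (𝓝 1) := by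
  have h := (tendsto_sinh_div_exp_atTop.comp
    ((tendsto_bigR_atTop C).atTop_div_const two_pos)).div
    (tendsto_sinh_div_exp_atTop.comp (tendsto_rho_atTop C hτ)) (by norm_num)
  rw [div_self (by norm_num)] at h
  refine h.congr' ?_
  filter_upwards [eventually_ne_atTop 0, (tendsto_gam_atTop hτ).eventually_gt_atTop 0,
    (tendsto_rho_atTop C hτ).eventually_gt_atTop 0] with n hn hγ hρ
  have hsinh : sinh (rho C τ n) ≠ 0 := (sinh_pos_iff.2 hρ).ne'
  simp only [Pi.div_apply, Function.comp_apply]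
  rw [sinHalfTheta, ← exp_half_bigR_sub_rho C τ hn hγ, exp_sub]
  field_simp

theorem tendsto_sinHalfTheta : Tendsto (sinHalfTheta C τ) atTop (𝓝[>] 0) := by
  have h := (tendsto_sinHalfTheta_div C hτ).mul (tendsto_mul_gam_div_natCast hτ (π / 2))
  rw [mul_zero] at h
  refine tendsto_nhdsWithin_iff.2 ⟨h.congr' ?_, ?_⟩
  · filter_upwards [eventually_ne_atTop 0, (tendsto_gam_atTop hτ).eventually_gt_atTop 0]
      with n hn hγ
    field_simp
  · filter_upwards [(tendsto_bigR_atTop C).eventually_gt_atTop 0,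
      (tendsto_rho_atTop C hτ).eventually_gt_atTop 0] with n hR hρ
    exact div_pos (sinh_pos_iff.2 (half_pos hR)) (sinh_pos_iff.2 hρ)

theorem theta_eventually_eq : ∀ᶠ n in atTop, theta C τ n = 2 * arcsin (sinHalfTheta C τ n) := by
  filter_upwards [(tendsto_rho_atTop C hτ).eventually_gt_atTop 0,
    tendsto_nhdsWithin_iff.1 (tendsto_sinHalfTheta C hτ) |>.2,
    (tendsto_sinHalfTheta C hτ).eventually (Ioo_mem_nhdsGT one_pos)] with n hρ hpos hlt1
  rw [theta, cosh_sq_sub_cosh_div_sinh_sq _ _ (sinh_pos_iff.2 hρ).ne', ← sinHalfTheta,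
    arccos_one_sub_two_mul_sq (le_of_lt hpos) hlt1.2.le]

theorem tendsto_theta_div : Tendsto (fun n => theta C τ n / (π * gam n τ / n)) atTop (𝓝 1) := by
  have hne : Tendsto (sinHalfTheta C τ) atTop (𝓝[≠] 0) :=
    (tendsto_sinHalfTheta C hτ).mono_right (nhdsWithin_mono _ fun _ hx => ne_of_gt hx)
  have h := (tendsto_arcsin_div_self.comp hne).mul (tendsto_sinHalfTheta_div C hτ)
  rw [one_mul] at h
  refine h.congr' ?_
  filter_upwards [theta_eventually_eq C hτ, eventually_ne_atTop 0,
    (tendsto_gam_atTop hτ).eventually_gt_atTop 0, hne.eventually_mem self_mem_nhdsWithin]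
    with n hθ hn hγ hx
  have hx : sinHalfTheta C τ n ≠ 0 := hx
  rw [Function.comp_apply, hθ]
  field_simp

theorem tendsto_two_pi_div_theta_atTop : Tendsto (fun n => 2 * π / theta C τ n) atTop atTop := by
  have hθ : Tendsto (theta C τ) atTop (𝓝[>] 0) := by
    have h := (tendsto_theta_div C hτ).mul (tendsto_mul_gam_div_natCast hτ π)
    rw [mul_zero] at h
    refine tendsto_nhdsWithin_iff.2 ⟨h.congr' ?_, ?_⟩
    · filter_upwards [eventually_ne_atTop 0, (tendsto_gam_atTop hτ).eventually_gt_atTop 0]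
        with n hn hγ
      field_simp
    · filter_upwards [theta_eventually_eq C hτ,
        tendsto_nhdsWithin_iff.1 (tendsto_sinHalfTheta C hτ) |>.2] with n hθ hx
      rw [hθ]
      exact mul_pos two_pos (arcsin_pos.2 hx)
  simpa [div_eq_mul_inv] using (tendsto_inv_nhdsGT_zero.comp hθ).const_mul_atTop two_pi_pos

theorem tendsto_nSec_atTop : Tendsto (nSec C τ) atTop atTop :=
  tendsto_nat_floor_atTop.comp (tendsto_two_pi_div_theta_atTop C hτ)

theorem tendsto_two_mul_div_gam_mul_nSec :
    Tendsto (fun n => 2 * n / (gam n τ * nSec C τ n)) atTop (𝓝 1) := by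
  have hfloor := tendsto_nat_floor_div_atTop.comp (tendsto_two_pi_div_theta_atTop C hτ)
  have h := (tendsto_theta_div C hτ).mul (hfloor.inv₀ one_ne_zero)
  rw [inv_one, one_mul] at h
  refine h.congr' ?_
  filter_upwards [eventually_ne_atTop 0, (tendsto_gam_atTop hτ).eventually_gt_atTop 0,
    (tendsto_two_pi_div_theta_atTop C hτ).eventually_gt_atTop 0,
    (tendsto_nSec_atTop C hτ).eventually_ne_atTop 0] with n hn hγ hpos hn'
  have hθ : theta C τ n ≠ 0 := by rintro h; simp [h] at hpos
  simp only [Function.comp_apply, nSec] at hn' ⊢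
  field_simp

theorem eventually_half_exp_gam_mul_le {ε : ℕ → ℝ}
    (hε : Tendsto ε atTop (𝓝 0)) :
    ∀ᶠ n : ℕ in atTop,
      1 / 2 * exp (gam n τ) * logloglog n * gam n τ * (1 + ε n) ≤ 1 / 2 * τ * loglog n := by
  have h := (tendsto_gam_div_logloglog hτ).mul (hε.const_add 1)
  rw [add_zero, mul_one] at h
  filter_upwards [h.eventually (eventually_le_nhds one_lt_two),
    tendsto_loglog_atTop.eventually_gt_atTop 0, tendsto_logloglog_atTop.eventually_gt_atTop 0]
    with n hle hLL hLLL
  have hexp : exp (gam n τ) = τ * loglog n / (2 * logloglog n ^ 2) := exp_log (by positivity)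
  calc 1 / 2 * exp (gam n τ) * logloglog n * gam n τ * (1 + ε n)
      = τ * loglog n / 4 * (gam n τ / logloglog n * (1 + ε n)) := by
        rw [hexp]; field_simp; ring
    _ ≤ τ * loglog n / 4 * 2 := by gcongr
    _ = 1 / 2 * τ * loglog n := by ring

end Asymptotics

theorem expected_vertices_in_narrow_run_general
    (α C τ : ℝ) (hτ : 0 < τ)
    (Ω : ℕ → Type) (mΩ : ∀ n, MeasurableSpace (Ω n))
    (μ : ∀ n, Measure (Ω n)) (hμ : ∀ n, IsProbabilityMeasure (μ n))
    (pts : ∀ n, Fin n → Ω n → ℝ × ℝ)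
    (hhrg : ∀ n, IsHRG α C n (μ n) (pts n)) :
    ∃ ε : ℕ → ℝ, Tendsto ε atTop (nhds 0) ∧
      (∀ᶠ n : ℕ in atTop, ∀ (j : ZMod (nSec C τ n)) (ℓ : ℕ), (ℓ : ℝ) ≤ wThr n τ →
        (∫ ω, (ptsInWindow (nSec C τ n) (fun i => (pts n i ω).1) j ℓ : ℝ) ∂(μ n)) ≤
          1 / 2 * Real.exp (gam n τ) * logloglog n * gam n τ * (1 + ε n)) ∧
      (∀ᶠ n : ℕ in atTop, ∀ (j : ZMod (nSec C τ n)) (ℓ : ℕ), (ℓ : ℝ) ≤ wThr n τ →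
        (∫ ω, (ptsInWindow (nSec C τ n) (fun i => (pts n i ω).1) j ℓ : ℝ) ∂(μ n)) ≤
          1 / 2 * τ * loglog n) := by
  set ε : ℕ → ℝ := fun n => 2 * n / (gam n τ * nSec C τ n) - 1
  have hε : Tendsto ε atTop (𝓝 0) := by
    simpa using (tendsto_two_mul_div_gam_mul_nSec C hτ).sub_const 1
  have hwindow : ∀ᶠ n : ℕ in atTop, ∀ (j : ZMod (nSec C τ n)) (ℓ : ℕ), (ℓ : ℝ) ≤ wThr n τ →
      (∫ ω, (ptsInWindow (nSec C τ n) (fun i => (pts n i ω).1) j ℓ : ℝ) ∂(μ n)) ≤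
        1 / 2 * exp (gam n τ) * logloglog n * gam n τ * (1 + ε n) := by
    filter_upwards [(tendsto_nSec_atTop C hτ).eventually_ne_atTop 0,
      (tendsto_gam_atTop hτ).eventually_gt_atTop 0] with n hn' hγ j ℓ hℓ
    have : NeZero (nSec C τ n) := ⟨hn'⟩
    calc _ ≤ (n * ℓ / nSec C τ n : ℝ) := (hhrg n).integral_ptsInWindow_le (nSec C τ n) j ℓ
      _ = ℓ * (n / nSec C τ n : ℝ) := by ring
      _ ≤ wThr n τ * (n / nSec C τ n : ℝ) := by gcongr
      _ = 1 / 2 * exp (gam n τ) * logloglog n * gam n τ * (1 + ε n) := by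
        simp only [ε, wThr]; field_simp; ring
  refine ⟨ε, hε, hwindow, ?_⟩
  filter_upwards [hwindow, eventually_half_exp_gam_mul_le hτ hε] with n hn hle j ℓ hℓ
  exact (hn j ℓ hℓ).trans hle

/-- **Expected number of vertices in a narrow run.**
For a family of hyperbolic random graphs on `n` vertices with parameters
`α ∈ (1/2,1)`, `C`, and fixed `τ > 0`: for every fixed angular interval `I` made of at
most `w = e^{γ}·log^{(3)} n` consecutive sectors, the expected number of sampled points
with angular coordinate in `I` is at most
`(1/2)·e^{γ}·log^{(3)}(n)·γ·(1 ± o(1))`; in particular, for all sufficiently large `n`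
it is at most `(1/2)·τ·log^{(2)}(n)`. -/
theorem expected_vertices_in_narrow_run
    (α C τ : ℝ) (hα : α ∈ Set.Ioo (1 / 2 : ℝ) 1) (hτ : 0 < τ)
    (Ω : ℕ → Type) (mΩ : ∀ n, MeasurableSpace (Ω n))
    (μ : ∀ n, Measure (Ω n)) (hμ : ∀ n, IsProbabilityMeasure (μ n))
    (pts : ∀ n, Fin n → Ω n → ℝ × ℝ)
    (hhrg : ∀ n, IsHRG α C n (μ n) (pts n)) :
    ∃ ε : ℕ → ℝ, Tendsto ε atTop (nhds 0) ∧
      (∀ᶠ n : ℕ in atTop, ∀ (j : ZMod (nSec C τ n)) (ℓ : ℕ), (ℓ : ℝ) ≤ wThr n τ →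
        (∫ ω, (ptsInWindow (nSec C τ n) (fun i => (pts n i ω).1) j ℓ : ℝ) ∂(μ n)) ≤
          1 / 2 * Real.exp (gam n τ) * logloglog n * gam n τ * (1 + ε n)) ∧
      (∀ᶠ n : ℕ in atTop, ∀ (j : ZMod (nSec C τ n)) (ℓ : ℕ), (ℓ : ℝ) ≤ wThr n τ →
        (∫ ω, (ptsInWindow (nSec C τ n) (fun i => (pts n i ω).1) j ℓ : ℝ) ∂(μ n)) ≤
          1 / 2 * τ * loglog n) :=
  expected_vertices_in_narrow_run_general α C τ hτ Ω mΩ μ hμ pts hhrg
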